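/- arXiv:2009.02668 — 4 statements merged into one kernel-verified Lean document; each statement's English description precedes it below -/
import Mathlib

section
/- Let C be an n × a real matrix with orthonormal columns (CᵀC = I_a), let R be a b × m real matrix with orthonormal rows (RRᵀ = I_b), and let F be an n × m real matrix. Suppose Y is an a × b real matrix with rank(Y) ≤ k such that ‖CᵀFRᵀ − Y‖_F ≤ ‖CᵀFRᵀ − Z‖_F for every a × b real matrix Z with rank(Z) ≤ k. Then for every a × b real matrix X with rank(X) ≤ k, ‖C·Y·R − F‖_F ≤ ‖C·X·R − F‖_F; that is, C·Y·R attains the minimum of ‖C·X·R − F‖_F over all matrices X of rank at most k. -/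
open Matrix

/-- The Frobenius norm of a real matrix. -/
noncomputable def frob {α β : Type*} [Fintype α] [Fintype β] (A : Matrix α β ℝ) : ℝ :=
  Real.sqrt (∑ i, ∑ j, (A i j) ^ 2)

lemma frobSq_eq_trace {α β : Type*} [Fintype α] [Fintype β] (A : Matrix α β ℝ) :
    ∑ i, ∑ j, (A i j) ^ 2 = trace (Aᵀ * A) := by
  simp only [Matrix.trace, Matrix.diag, Matrix.mul_apply, Matrix.transpose_apply]
  rw [Finset.sum_comm]
  simp [sq]

lemma frob_eq_sqrt_trace {α β : Type*} [Fintype α] [Fintype β] (A : Matrix α β ℝ) :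
    frob A = Real.sqrt (trace (Aᵀ * A)) := by
  rw [frob, frobSq_eq_trace]

lemma frobSq_nonneg {α β : Type*} [Fintype α] [Fintype β] (A : Matrix α β ℝ) :
    0 ≤ trace (Aᵀ * A) := by
  rw [← frobSq_eq_trace]
  positivity

theorem stmt2 (n a b m k : ℕ)
    (C : Matrix (Fin n) (Fin a) ℝ) (hC : Cᵀ * C = 1)
    (R : Matrix (Fin b) (Fin m) ℝ) (hR : R * Rᵀ = 1)
    (F : Matrix (Fin n) (Fin m) ℝ)
    (Y : Matrix (Fin a) (Fin b) ℝ) (hYrank : Y.rank ≤ k)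
    (hYopt : ∀ Z : Matrix (Fin a) (Fin b) ℝ, Z.rank ≤ k →
      frob (Cᵀ * F * Rᵀ - Y) ≤ frob (Cᵀ * F * Rᵀ - Z))
    (X : Matrix (Fin a) (Fin b) ℝ) (hXrank : X.rank ≤ k) :
    frob (C * Y * R - F) ≤ frob (C * X * R - F) := by
  set G := Cᵀ * F * Rᵀ with hG
  -- key identity
  have key : ∀ Z : Matrix (Fin a) (Fin b) ℝ,
      trace ((C * Z * R - F)ᵀ * (C * Z * R - F)) =
      trace ((G - Z)ᵀ * (G - Z)) + (trace (Fᵀ * F) - trace (Gᵀ * G)) := by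
    intro Z
    have h1 : trace ((C * Z * R)ᵀ * (C * Z * R)) = trace (Zᵀ * Z) := by
      have : (C * Z * R)ᵀ * (C * Z * R) = Rᵀ * (Zᵀ * (Cᵀ * C) * Z) * R := by
        simp [Matrix.transpose_mul, Matrix.mul_assoc]
      rw [this, hC, Matrix.mul_one, Matrix.trace_mul_cycle, ← Matrix.mul_assoc, hR,
        Matrix.one_mul]
    have h2 : trace ((C * Z * R)ᵀ * F) = trace (Zᵀ * G) := by
      have : (C * Z * R)ᵀ * F = Rᵀ * (Zᵀ * (Cᵀ * F)) := by
        simp [Matrix.transpose_mul, Matrix.mul_assoc]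
      rw [this, Matrix.trace_mul_comm, hG]
      rw [Matrix.mul_assoc, Matrix.mul_assoc]
    have h3 : trace (Fᵀ * (C * Z * R)) = trace (Zᵀ * G) := by
      rw [← h2, ← Matrix.trace_transpose (Fᵀ * (C * Z * R))]
      congr 1
      simp [Matrix.transpose_mul, Matrix.mul_assoc]
    have h4 : trace (Gᵀ * Z) = trace (Zᵀ * G) := by
      rw [← Matrix.trace_transpose (Gᵀ * Z)]
      simp [Matrix.transpose_mul]
    simp only [Matrix.transpose_sub, Matrix.sub_mul, Matrix.mul_sub,
      Matrix.trace_sub]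
    rw [h1, h2, h3, h4]
    ring
  have hYX : trace ((G - Y)ᵀ * (G - Y)) ≤ trace ((G - X)ᵀ * (G - X)) := by
    have h := hYopt X hXrank
    rw [frob_eq_sqrt_trace, frob_eq_sqrt_trace] at h
    have h2 := pow_le_pow_left₀ (Real.sqrt_nonneg _) h 2
    rwa [Real.sq_sqrt (frobSq_nonneg _), Real.sq_sqrt (frobSq_nonneg _)] at h2
  rw [frob_eq_sqrt_trace, frob_eq_sqrt_trace, key Y, key X]
  exact Real.sqrt_le_sqrt (by linarith)
end

section
/- Let R be a b × m real matrix with orthonormal rows (RRᵀ = I_b), let G be an a × m real matrix, and let Y be an a × b real matrix with rank(Y) ≤ k such that ‖G·Rᵀ − Y‖_F ≤ ‖G·Rᵀ − Z‖_F for every a × b real matrix Z with rank(Z) ≤ k. Then for every a × b real matrix Z with rank(Z) ≤ k, ‖G − Y·R‖_F ≤ ‖G − Z·R‖_F. -/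
open Matrix

lemma frob_eq_trace {α β : Type*} [Fintype α] [Fintype β] (A : Matrix α β ℝ) :
    frob A = Real.sqrt ((A * Aᵀ).trace) := by
  unfold frob
  congr 1
  simp [Matrix.trace, Matrix.mul_apply, Matrix.diag, sq]

lemma sq_sum_nonneg {α β : Type*} [Fintype α] [Fintype β] (A : Matrix α β ℝ) :
    0 ≤ ∑ i, ∑ j, (A i j) ^ 2 :=
  Finset.sum_nonneg fun _ _ => Finset.sum_nonneg fun _ _ => sq_nonneg _

lemma trace_nonneg {α β : Type*} [Fintype α] [Fintype β] (A : Matrix α β ℝ) :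
    0 ≤ (A * Aᵀ).trace := by
  have : (A * Aᵀ).trace = ∑ i, ∑ j, (A i j) ^ 2 := by
    simp [Matrix.trace, Matrix.mul_apply, Matrix.diag, sq]
  rw [this]; exact sq_sum_nonneg A

theorem stmt5 (b m a k : ℕ)
    (R : Matrix (Fin b) (Fin m) ℝ) (hR : R * Rᵀ = 1)
    (G : Matrix (Fin a) (Fin m) ℝ)
    (Y : Matrix (Fin a) (Fin b) ℝ) (hYrank : Y.rank ≤ k)
    (hYopt : ∀ Z : Matrix (Fin a) (Fin b) ℝ, Z.rank ≤ k →
      frob (G * Rᵀ - Y) ≤ frob (G * Rᵀ - Z))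
    (Z : Matrix (Fin a) (Fin b) ℝ) (hZrank : Z.rank ≤ k) :
    frob (G - Y * R) ≤ frob (G - Z * R) := by
  set A : Matrix (Fin a) (Fin m) ℝ := G - G * Rᵀ * R with hA
  have hARt : A * Rᵀ = 0 := by
    rw [hA, Matrix.sub_mul, Matrix.mul_assoc (G * Rᵀ) R Rᵀ, hR, Matrix.mul_one, sub_self]
  -- key decomposition
  have key : ∀ W : Matrix (Fin a) (Fin b) ℝ,
      ((G - W * R) * (G - W * R)ᵀ).trace
        = (A * Aᵀ).trace + ((G * Rᵀ - W) * (G * Rᵀ - W)ᵀ).trace := by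
    intro W
    set B : Matrix (Fin a) (Fin b) ℝ := G * Rᵀ - W with hB
    have hdecomp : G - W * R = A + B * R := by
      rw [hA, hB, Matrix.sub_mul]
      abel
    have hBRA : (B * R * Aᵀ).trace = 0 := by
      have : (B * R * Aᵀ)ᵀ = A * Rᵀ * Bᵀ := by
        simp [Matrix.transpose_mul, Matrix.mul_assoc]
      calc (B * R * Aᵀ).trace = (B * R * Aᵀ)ᵀ.trace := (Matrix.trace_transpose _).symm
        _ = (A * Rᵀ * Bᵀ).trace := by rw [this]
        _ = 0 := by rw [hARt, Matrix.zero_mul, Matrix.trace_zero]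
    have hABR : (A * (B * R)ᵀ).trace = 0 := by
      have : A * (B * R)ᵀ = A * Rᵀ * Bᵀ := by
        simp [Matrix.transpose_mul, Matrix.mul_assoc]
      rw [this, hARt, Matrix.zero_mul, Matrix.trace_zero]
    have hBR : (B * R * (B * R)ᵀ).trace = (B * Bᵀ).trace := by
      have : B * R * (B * R)ᵀ = B * (R * Rᵀ) * Bᵀ := by
        simp [Matrix.transpose_mul, Matrix.mul_assoc]
      rw [this, hR, Matrix.mul_one]
    rw [hdecomp]
    have expand : (A + B * R) * (A + B * R)ᵀ
        = A * Aᵀ + A * (B * R)ᵀ + (B * R * Aᵀ + B * R * (B * R)ᵀ) := by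
      rw [Matrix.transpose_add, Matrix.add_mul, Matrix.mul_add, Matrix.mul_add]
    rw [expand, Matrix.trace_add, Matrix.trace_add, Matrix.trace_add, hABR, hBRA, hBR]
    ring
  -- reduce hYopt to traces
  have hle : ((G * Rᵀ - Y) * (G * Rᵀ - Y)ᵀ).trace ≤ ((G * Rᵀ - Z) * (G * Rᵀ - Z)ᵀ).trace := by
    have h := hYopt Z hZrank
    rw [frob_eq_trace, frob_eq_trace] at h
    exact (Real.sqrt_le_sqrt_iff (trace_nonneg _)).mp h
  rw [frob_eq_trace, frob_eq_trace, key Y, key Z]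
  exact Real.sqrt_le_sqrt (by linarith)
end

section
/- Let η ∈ (0,1), let σ be a real number, and let K₁, K₂, M, K̃₁ be d × d real symmetric matrices. Set K̂₁ = K₁ + σ²·I and K̂₂ = K₂ + σ²·I. Suppose K₂ ⪯ M ⪯ K₁, (1 − η)·K̂₁ ⪯ K̂₂, and (1 − η/4)·K̂₁ ⪯ K̃₁ ⪯ (1 + η/4)·K̂₁. Then (1 − η/4)·(M + σ²·I) ⪯ K̃₁ ⪯ ((1 + η/4)/(1 − η))·(M + σ²·I). -/
/-!
Adding `σ² • 1` preserves the Loewner order, so `K₂ ⪯ M ⪯ K₁` gives `K̂₂ ⪯ M + σ² • 1 ⪯ K̂₁`.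
The lower bound is then `(1 - η/4) • (M + σ² • 1) ⪯ (1 - η/4) • K̂₁ ⪯ K̃₁`; for the upper bound,
dividing the histogram property by `1 - η` gives `(1 + η/4) • K̂₁ ⪯ ((1 + η/4)/(1 - η)) • K̂₂`,
and `K̂₂ ⪯ M + σ² • 1`.
-/

/-- The Loewner partial order on real square matrices: `M ⪯ N` iff `N - M` is
positive semidefinite. -/
def LoewnerLE {d : ℕ} (M N : Matrix (Fin d) (Fin d) ℝ) : Prop := (N - M).PosSemidef

open scoped MatrixOrder

theorem loewnerLE_iff_le {d : ℕ} {M N : Matrix (Fin d) (Fin d) ℝ} : LoewnerLE M N ↔ M ≤ N :=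
  Iff.rfl

theorem smul_le_div_smul_of_smul_le {𝕜 E : Type*} [Field 𝕜] [LinearOrder 𝕜]
    [IsStrictOrderedRing 𝕜] [AddCommMonoid E] [PartialOrder E] [Module 𝕜 E] [PosSMulMono 𝕜 E]
    {a b : 𝕜} {x y : E} (ha : 0 ≤ a) (hb : 0 < b) (h : b • x ≤ y) : a • x ≤ (a / b) • y :=
  calc a • x = (a / b) • b • x := by rw [smul_smul, div_mul_cancel₀ a hb.ne']
    _ ≤ (a / b) • y := smul_le_smul_of_nonneg_left h (div_nonneg ha hb.le)

theorem stmt7_general (d : ℕ) (η σ : ℝ) (hη0 : 0 < η) (hη1 : η < 1)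
    (K₁ K₂ M Kt₁ : Matrix (Fin d) (Fin d) ℝ)
    (Kh₁ Kh₂ : Matrix (Fin d) (Fin d) ℝ)
    (hKh₁ : Kh₁ = K₁ + σ ^ 2 • (1 : Matrix (Fin d) (Fin d) ℝ))
    (hKh₂ : Kh₂ = K₂ + σ ^ 2 • (1 : Matrix (Fin d) (Fin d) ℝ))
    (hsand₁ : LoewnerLE K₂ M) (hsand₂ : LoewnerLE M K₁)
    (hhist : LoewnerLE ((1 - η) • Kh₁) Kh₂)
    (happrox₁ : LoewnerLE ((1 - η / 4) • Kh₁) Kt₁)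
    (happrox₂ : LoewnerLE Kt₁ ((1 + η / 4) • Kh₁)) :
    LoewnerLE ((1 - η / 4) • (M + σ ^ 2 • (1 : Matrix (Fin d) (Fin d) ℝ))) Kt₁ ∧
      LoewnerLE Kt₁ (((1 + η / 4) / (1 - η)) • (M + σ ^ 2 • (1 : Matrix (Fin d) (Fin d) ℝ))) := by
  simp only [loewnerLE_iff_le] at *
  have hMKh₁ : M + σ ^ 2 • 1 ≤ Kh₁ := hKh₁ ▸ add_le_add_left hsand₂ _
  have hKh₂M : Kh₂ ≤ M + σ ^ 2 • 1 := hKh₂ ▸ add_le_add_left hsand₁ _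
  constructor
  · exact (smul_le_smul_of_nonneg_left hMKh₁ (by linarith)).trans happrox₁
  · calc Kt₁ ≤ (1 + η / 4) • Kh₁ := happrox₂
      _ ≤ ((1 + η / 4) / (1 - η)) • Kh₂ :=
        smul_le_div_smul_of_smul_le (by linarith) (by linarith) hhist
      _ ≤ ((1 + η / 4) / (1 - η)) • (M + σ ^ 2 • 1) :=
        smul_le_smul_of_nonneg_left hKh₂M (div_nonneg (by linarith) (by linarith))

theorem stmt7 (d : ℕ) (η σ : ℝ) (hη0 : 0 < η) (hη1 : η < 1)
    (K₁ K₂ M Kt₁ : Matrix (Fin d) (Fin d) ℝ)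
    (hK₁ : K₁.IsSymm) (hK₂ : K₂.IsSymm) (hM : M.IsSymm) (hKt₁ : Kt₁.IsSymm)
    (Kh₁ Kh₂ : Matrix (Fin d) (Fin d) ℝ)
    (hKh₁ : Kh₁ = K₁ + σ ^ 2 • (1 : Matrix (Fin d) (Fin d) ℝ))
    (hKh₂ : Kh₂ = K₂ + σ ^ 2 • (1 : Matrix (Fin d) (Fin d) ℝ))
    (hsand₁ : LoewnerLE K₂ M) (hsand₂ : LoewnerLE M K₁)
    (hhist : LoewnerLE ((1 - η) • Kh₁) Kh₂)
    (happrox₁ : LoewnerLE ((1 - η / 4) • Kh₁) Kt₁)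
    (happrox₂ : LoewnerLE Kt₁ ((1 + η / 4) • Kh₁)) :
    LoewnerLE ((1 - η / 4) • (M + σ ^ 2 • (1 : Matrix (Fin d) (Fin d) ℝ))) Kt₁ ∧
      LoewnerLE Kt₁ (((1 + η / 4) / (1 - η)) • (M + σ ^ 2 • (1 : Matrix (Fin d) (Fin d) ℝ))) :=
  stmt7_general d η σ hη0 hη1 K₁ K₂ M Kt₁ Kh₁ Kh₂ hKh₁ hKh₂ hsand₁ hsand₂ hhist happrox₁ happrox₂
end

section
/- Let η ∈ (0,1), let γ > 0 and K ≥ 0 be real numbers, let A and Ã be real matrices with d columns, and let Π be a nonempty set of d × d real matrices. Suppose that for every X ∈ Π, (1 − η)·‖Ã·(I − X)‖_F − K ≤ ‖A·(I − X)‖_F ≤ (1 + η)·‖Ã·(I − X)‖_F + K. Suppose P̃ ∈ Π satisfies ‖Ã·(I − P̃)‖_F ≤ ‖Ã·(I − X)‖_F for all X ∈ Π, suppose P̂ ∈ Π satisfies ‖A·(I − P̂)‖_F ≤ ‖A·(I − X)‖_F for all X ∈ Π, and suppose P ∈ Π satisfies ‖Ã·(I − P)‖_F ≤ γ·‖Ã·(I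 − P̃)‖_F. Then ‖A·(I − P)‖_F ≤ ((1 + η)/(1 − η))·γ·‖A·(I − P̂)‖_F + ((1 + η)·γ/(1 − η) + 1)·K. -/
theorem stmt13 (n₁ n₂ d : ℕ) (η γ K : ℝ)
    (hη0 : 0 < η) (hη1 : η < 1) (hγ : 0 < γ) (hK : 0 ≤ K)
    (A : Matrix (Fin n₁) (Fin d) ℝ) (At : Matrix (Fin n₂) (Fin d) ℝ)
    (Ps : Set (Matrix (Fin d) (Fin d) ℝ)) (hPs : Ps.Nonempty)
    (happrox : ∀ X ∈ Ps,
      (1 - η) * frob (At * (1 - X)) - K ≤ frob (A * (1 - X)) ∧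
        frob (A * (1 - X)) ≤ (1 + η) * frob (At * (1 - X)) + K)
    (Pt : Matrix (Fin d) (Fin d) ℝ) (hPt : Pt ∈ Ps)
    (hPtopt : ∀ X ∈ Ps, frob (At * (1 - Pt)) ≤ frob (At * (1 - X)))
    (Ph : Matrix (Fin d) (Fin d) ℝ) (hPh : Ph ∈ Ps)
    (hPhopt : ∀ X ∈ Ps, frob (A * (1 - Ph)) ≤ frob (A * (1 - X)))
    (P : Matrix (Fin d) (Fin d) ℝ) (hP : P ∈ Ps)
    (hPgamma : frob (At * (1 - P)) ≤ γ * frob (At * (1 - Pt))) :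
    frob (A * (1 - P)) ≤
      ((1 + η) / (1 - η)) * γ * frob (A * (1 - Ph)) +
        ((1 + η) * γ / (1 - η) + 1) * K := by

  have h1 := (happrox P hP).2
  have h2 := (happrox Ph hPh).1
  have h3 := hPtopt Ph hPh
  have hne : (0:ℝ) < 1 - η := by linarith
  have hb : 0 ≤ frob (At * (1 - P)) := Real.sqrt_nonneg _
  set a := frob (A * (1 - P))
  set b := frob (At * (1 - P))
  set c := frob (At * (1 - Pt))
  set e := frob (At * (1 - Ph))
  set f := frob (A * (1 - Ph))
  have hc1 : (0:ℝ) ≤ 1 + η := by linarith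
  have step1 : a ≤ (1 + η) * γ * e + K := by
    have : b ≤ γ * e := le_trans hPgamma (by nlinarith)
    nlinarith
  have key : (1 - η) * a ≤ (1 + η) * γ * f + ((1 + η) * γ + (1 - η)) * K := by
    have p1 := mul_le_mul_of_nonneg_left step1 hne.le
    have p2 := mul_le_mul_of_nonneg_left h2 (mul_nonneg hc1 hγ.le)
    nlinarith
  have heq : ((1 + η) / (1 - η)) * γ * f + ((1 + η) * γ / (1 - η) + 1) * K
      = ((1 + η) * γ * f + ((1 + η) * γ + (1 - η)) * K) / (1 - η) := by
    field_simp
  rw [heq, le_div_iff₀ hne]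
  linarith [key]
end
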